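/- If (C, ℓ) is an orthogonalizable Λ-space with orthogonal ordered basis (v_1, …, v_n), then the dual space (C*, ℓ*) is an orthogonalizable Λ-space with orthogonal ordered basis given by the dual basis (v_1*, …, v_n*), and moreover ℓ*(v_i*) = −ℓ(v_i) for each i. -/

import Mathlib

/-!
Formalization setup following Usher–Zhang, "Persistent homology and Floer–Novikov theory".

We fix an additive subgroup `Γ ≤ ℝ` and abstract the Novikov field `Λ = Λ^{K,Γ}` as a field
`Λ` equipped with a valuation `ν : Λ → ℝ ∪ {∞}` (encoded in `EReal`, with `ν x = ⊤ ↔ x = 0`)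
satisfying (V1),(V2),(V3), whose values on nonzero elements lie in (and fill out) `Γ`.

Filtration functions `ℓ : C → ℝ ∪ {-∞}` are encoded as `EReal`-valued functions which never
take the value `⊤`, with `ℓ x = ⊥ ↔ x = 0`.
-/

noncomputable section

/-- The Novikov field `Λ^{K,Γ}` together with its valuation `ν(Σ a_g T^g) = min {g : a_g ≠ 0}`:
a field `Λ` with a function `ν : Λ → ℝ ∪ {∞}` such that (V1) `ν x = ∞ ↔ x = 0`,
(V2) `ν (xy) = ν x + ν y`, (V3) `ν (x+y) ≥ min (ν x) (ν y)`, and the values of `ν` on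
nonzero elements are exactly the elements of `Γ`. -/
structure NovikovStructure (Γ : AddSubgroup ℝ) (Λ : Type*) [Field Λ] where
  ν : Λ → EReal
  ν_eq_top_iff : ∀ x : Λ, ν x = ⊤ ↔ x = 0
  ν_mul : ∀ x y : Λ, ν (x * y) = ν x + ν y
  min_le_ν_add : ∀ x y : Λ, min (ν x) (ν y) ≤ ν (x + y)
  ν_mem : ∀ x : Λ, x ≠ 0 → ∃ g : Γ, ν x = ((g : ℝ) : EReal)
  ν_surj : ∀ g : Γ, ∃ x : Λ, ν x = ((g : ℝ) : EReal)

/-- `(C, ℓ)` is a non-Archimedean normed vector space over `Λ` (Definition 2.2):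
(F1) `ℓ x = -∞ ↔ x = 0`; (F2) `ℓ (λ • x) = ℓ x - ν λ`; (F3) `ℓ (x+y) ≤ max (ℓ x) (ℓ y)`. -/
structure IsNonArchNorm {Γ : AddSubgroup ℝ} {Λ : Type*} [Field Λ] (NS : NovikovStructure Γ Λ)
    {C : Type*} [AddCommGroup C] [Module Λ C] (ℓ : C → EReal) : Prop where
  eq_bot_iff : ∀ x : C, ℓ x = ⊥ ↔ x = 0
  ne_top : ∀ x : C, ℓ x ≠ ⊤
  smul_eq : ∀ (a : Λ) (x : C), ℓ (a • x) = ℓ x - NS.ν a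
  add_le : ∀ x y : C, ℓ (x + y) ≤ max (ℓ x) (ℓ y)

/-- A finite ordered family `(w i)` in `(C, ℓ)` is orthogonal:
`ℓ (∑ λᵢ • wᵢ) = maxᵢ ℓ (λᵢ • wᵢ)` for all coefficients `λᵢ ∈ Λ` (Definition 2.8). -/
def IsOrthFamily (Λ : Type*) [Field Λ] {C : Type*} [AddCommGroup C] [Module Λ C]
    (ℓ : C → EReal) {ι : Type*} [Fintype ι] (w : ι → C) : Prop :=
  ∀ a : ι → Λ, ℓ (∑ i, a i • w i) = ⨆ i, ℓ (a i • w i)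

/-- Two subspaces `V, W` of `(C, ℓ)` are orthogonal if
`ℓ (v + w) = max (ℓ v) (ℓ w)` for all `v ∈ V`, `w ∈ W` (Definition 2.8). -/
def AreOrthogonal {Λ : Type*} [Field Λ] {C : Type*} [AddCommGroup C] [Module Λ C]
    (ℓ : C → EReal) (V W : Submodule Λ C) : Prop :=
  ∀ v ∈ V, ∀ w ∈ W, ℓ (v + w) = max (ℓ v) (ℓ w)

/-- An orthogonalizable `Λ`-space: a finite-dimensional non-Archimedean normed `Λ`-vector
space admitting an orthogonal (finite) basis. -/
def IsOrthogonalizable {Γ : AddSubgroup ℝ} {Λ : Type*} [Field Λ] (NS : NovikovStructure Γ Λ)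
    {C : Type*} [AddCommGroup C] [Module Λ C] (ℓ : C → EReal) : Prop :=
  IsNonArchNorm NS ℓ ∧ ∃ (n : ℕ) (b : Module.Basis (Fin n) Λ C), IsOrthFamily Λ ℓ ⇑b

/-- The dual filtration function `ℓ*(φ) = sup_{0 ≠ x ∈ C} (-ℓ(x) - ν(φ(x)))` on the dual
space `C* = Hom_Λ(C, Λ)` (Section 2.4). -/
noncomputable def dualFilt {Γ : AddSubgroup ℝ} {Λ : Type*} [Field Λ]
    (NS : NovikovStructure Γ Λ) {C : Type*} [AddCommGroup C] [Module Λ C]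
    (ℓ : C → EReal) (φ : Module.Dual Λ C) : EReal :=
  ⨆ x : {x : C // x ≠ 0}, (-(ℓ (x : C)) - NS.ν (φ (x : C)))

/-!
Writing `x = Σ cᵢ vᵢ`, the term of `φ x = Σ cᵢ φ(vᵢ)` of least valuation together with the
orthogonality bound `ℓ x ≥ ℓ(cᵢ vᵢ)` gives `-ℓ x - ν(φ x) ≤ -ℓ(vᵢ) - ν(φ vᵢ)`, so
`ℓ*(φ) = maxᵢ (-ℓ(vᵢ) - ν(φ vᵢ))`. As the `φ(vᵢ)` are the coordinates of `φ` in the dual basis,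
`ℓ*` is the filtration `Σ aᵢ vᵢ* ↦ maxᵢ (-ℓ(vᵢ) - ν aᵢ)`, and any filtration of this shape is a
non-Archimedean norm for which the basis is orthogonal.
-/

theorem Monotone.map_iSup_of_finite {α β ι : Type*} [CompleteLinearOrder α]
    [CompleteLinearOrder β] [Finite ι] {f : α → β} (hf : Monotone f) (hbot : f ⊥ = ⊥)
    (g : ι → α) : f (⨆ i, g i) = ⨆ i, f (g i) := by
  cases isEmpty_or_nonempty ι
  · simp only [iSup_of_empty, hbot]
  · obtain ⟨i, hi⟩ := exists_eq_ciSup_of_finite (f := g)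
    exact le_antisymm (hi ▸ le_iSup (f ∘ g) i) hf.le_map_iSup

namespace NovikovStructure

variable {Γ : AddSubgroup ℝ} {Λ : Type*} [Field Λ] (NS : NovikovStructure Γ Λ)

theorem ν_zero : NS.ν 0 = ⊤ := (NS.ν_eq_top_iff 0).mpr rfl

theorem ν_ne_bot (x : Λ) : NS.ν x ≠ ⊥ := by
  by_cases hx : x = 0
  · simp [hx, ν_zero]
  · obtain ⟨g, hg⟩ := NS.ν_mem x hx
    simp [hg]

theorem ν_one : NS.ν 1 = 0 := by
  obtain ⟨g, hg⟩ := NS.ν_mem (1 : Λ) one_ne_zero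
  have h : ((g : ℝ) : EReal) = g + g := by rw [← hg, ← NS.ν_mul, mul_one]
  have hg0 : (g : ℝ) = 0 := by
    have : (g : ℝ) = g + g := by exact_mod_cast h
    linarith
  rw [hg, hg0, EReal.coe_zero]

theorem le_ν_sum {ι : Type*} (s : Finset ι) (f : ι → Λ) {b : EReal}
    (h : ∀ i ∈ s, b ≤ NS.ν (f i)) : b ≤ NS.ν (∑ i ∈ s, f i) :=
  Finset.sum_induction f (b ≤ NS.ν ·)
    (fun x y hx hy => (le_min hx hy).trans (NS.min_le_ν_add x y)) (NS.ν_zero ▸ le_top) h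

theorem sub_ν_mul (r : EReal) (a b : Λ) : r - NS.ν (a * b) = r - NS.ν b - NS.ν a := by
  rw [NS.ν_mul, sub_eq_add_neg, EReal.neg_add (.inl (NS.ν_ne_bot a)) (.inr (NS.ν_ne_bot b))]
  simp only [sub_eq_add_neg]
  ac_rfl

end NovikovStructure

section BasisFilt

variable {Γ : AddSubgroup ℝ} {Λ : Type*} [Field Λ] (NS : NovikovStructure Γ Λ)
  {E : Type*} [AddCommGroup E] [Module Λ E] {ι : Type*}

def basisFilt (b : Module.Basis ι Λ E) (r : ι → ℝ) (x : E) : EReal :=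
  ⨆ i, (r i : EReal) - NS.ν (b.repr x i)

variable (b : Module.Basis ι Λ E) (r : ι → ℝ)

theorem basisFilt_sum [Fintype ι] (a : ι → Λ) :
    basisFilt NS b r (∑ i, a i • b i) = ⨆ i, (r i : EReal) - NS.ν (a i) := by
  simp only [basisFilt, b.repr_sum_self]

theorem basisFilt_smul_basis (a : Λ) (i : ι) :
    basisFilt NS b r (a • b i) = r i - NS.ν a := by
  classical
  refine le_antisymm (iSup_le fun j => ?_) (le_iSup_of_le i (by simp))
  rcases eq_or_ne j i with rfl | hji
  · simp
  · simp [hji.symm, NS.ν_zero]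

theorem basisFilt_basis (i : ι) : basisFilt NS b r (b i) = r i := by
  simpa [NS.ν_one] using basisFilt_smul_basis NS b r 1 i

theorem isOrthFamily_basisFilt [Fintype ι] : IsOrthFamily Λ (basisFilt NS b r) b := fun a => by
  simp only [basisFilt_sum, basisFilt_smul_basis]

theorem basisFilt_eq_bot_iff (x : E) : basisFilt NS b r x = ⊥ ↔ x = 0 := by
  simp only [basisFilt, iSup_eq_bot, sub_eq_add_neg, EReal.add_eq_bot_iff, EReal.coe_ne_bot,
    false_or, EReal.neg_eq_bot_iff, NS.ν_eq_top_iff]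
  exact b.forall_coord_eq_zero_iff

theorem basisFilt_ne_top [Finite ι] (x : E) : basisFilt NS b r x ≠ ⊤ := by
  cases isEmpty_or_nonempty ι
  · simp [basisFilt]
  · obtain ⟨i, hi⟩ := exists_eq_ciSup_of_finite (f := fun i => (r i : EReal) - NS.ν (b.repr x i))
    rw [basisFilt, ← hi, sub_eq_add_neg]
    exact EReal.add_ne_top (EReal.coe_ne_top _) (by simpa using NS.ν_ne_bot _)

theorem basisFilt_smul [Finite ι] (a : Λ) (x : E) :
    basisFilt NS b r (a • x) = basisFilt NS b r x - NS.ν a := by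
  simp only [basisFilt, map_smul, Finsupp.smul_apply, smul_eq_mul, NS.sub_ν_mul]
  exact ((Monotone.map_iSup_of_finite (fun _ _ h => EReal.sub_le_sub h le_rfl)
    (EReal.bot_sub _)) _).symm

theorem basisFilt_add_le (x y : E) :
    basisFilt NS b r (x + y) ≤ max (basisFilt NS b r x) (basisFilt NS b r y) := by
  refine iSup_le fun i => ?_
  have hanti : Antitone fun t : EReal => (r i : EReal) - t := fun _ _ h => EReal.sub_le_sub le_rfl h
  calc (r i : EReal) - NS.ν (b.repr (x + y) i)
      ≤ (r i : EReal) - min (NS.ν (b.repr x i)) (NS.ν (b.repr y i)) := by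
        rw [map_add, Finsupp.add_apply]; exact hanti (NS.min_le_ν_add _ _)
    _ = max ((r i : EReal) - NS.ν (b.repr x i)) ((r i : EReal) - NS.ν (b.repr y i)) :=
        hanti.map_min
    _ ≤ _ := max_le_max (le_iSup_of_le i le_rfl) (le_iSup_of_le i le_rfl)

theorem isNonArchNorm_basisFilt [Finite ι] : IsNonArchNorm NS (basisFilt NS b r) :=
  ⟨basisFilt_eq_bot_iff NS b r, basisFilt_ne_top NS b r, basisFilt_smul NS b r,
    basisFilt_add_le NS b r⟩

end BasisFilt

section Dual

variable {Γ : AddSubgroup ℝ} {Λ : Type*} [Field Λ] {NS : NovikovStructure Γ Λ}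
  {C : Type*} [AddCommGroup C] [Module Λ C] {ℓ : C → EReal}

theorem IsNonArchNorm.coe_toReal (hna : IsNonArchNorm NS ℓ) {x : C} (hx : x ≠ 0) :
    ((ℓ x).toReal : EReal) = ℓ x :=
  EReal.coe_toReal (hna.ne_top x) (mt (hna.eq_bot_iff x).mp hx)

theorem IsNonArchNorm.neg_sub_ν (hna : IsNonArchNorm NS ℓ) {x : C} (hx : x ≠ 0) (a : Λ) :
    -ℓ x - NS.ν a = -(ℓ x + NS.ν a) :=
  (EReal.neg_add (.inl (mt (hna.eq_bot_iff x).mp hx)) (.inl (hna.ne_top x))).symm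

variable {ι : Type*} [Fintype ι] {v : Module.Basis ι Λ C}

theorem IsOrthFamily.exists_add_ν_le (hna : IsNonArchNorm NS ℓ) (hv : IsOrthFamily Λ ℓ v)
    (φ : Module.Dual Λ C) {x : C} (hφx : φ x ≠ 0) :
    ∃ i, ℓ (v i) + NS.ν (φ (v i)) ≤ ℓ x + NS.ν (φ x) := by
  set c := v.repr x
  have hx : ∑ i, c i • v i = x := v.sum_repr x
  have hφ : φ x = ∑ i, c i * φ (v i) := by
    conv_lhs => rw [← hx]
    simp only [map_sum, map_smul, smul_eq_mul]
  rcases isEmpty_or_nonempty ι with _ | _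
  · simp [hφ] at hφx
  obtain ⟨i, hi⟩ := Finite.exists_min fun i => NS.ν (c i * φ (v i))
  have hν : NS.ν (c i) + NS.ν (φ (v i)) ≤ NS.ν (φ x) :=
    NS.ν_mul _ _ ▸ hφ ▸ NS.le_ν_sum _ _ fun j _ => hi j
  have hc : c i ≠ 0 := by
    rintro hc
    rw [hc, NS.ν_zero, EReal.top_add_of_ne_bot (NS.ν_ne_bot _), top_le_iff,
      NS.ν_eq_top_iff] at hν
    exact hφx hν
  obtain ⟨g, hg⟩ := NS.ν_mem _ hc
  have hℓ : ℓ (v i) - NS.ν (c i) ≤ ℓ x := by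
    rw [← hna.smul_eq]
    conv_rhs => rw [← hx, hv]
    exact le_iSup (fun j => ℓ (c j • v j)) i
  refine ⟨i, ?_⟩
  calc ℓ (v i) + NS.ν (φ (v i))
      = (ℓ (v i) - NS.ν (c i)) + (NS.ν (c i) + NS.ν (φ (v i))) := by
        rw [hg, ← add_assoc, EReal.sub_add_cancel]
    _ ≤ ℓ x + NS.ν (φ x) := add_le_add hℓ hν

theorem IsOrthFamily.dualFilt_eq_iSup (hna : IsNonArchNorm NS ℓ) (hv : IsOrthFamily Λ ℓ v)
    (φ : Module.Dual Λ C) : dualFilt NS ℓ φ = ⨆ i, -ℓ (v i) - NS.ν (φ (v i)) := by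
  refine le_antisymm (iSup_le fun ⟨x, hx⟩ => ?_)
    (iSup_le fun i => le_iSup_of_le ⟨v i, v.ne_zero i⟩ le_rfl)
  by_cases hφx : φ x = 0
  · simp [hφx, NS.ν_zero]
  · obtain ⟨i, hi⟩ := hv.exists_add_ν_le hna φ hφx
    refine le_iSup_of_le i ?_
    rw [hna.neg_sub_ν hx, hna.neg_sub_ν (v.ne_zero i)]
    exact EReal.neg_le_neg_iff.mpr hi

theorem IsOrthFamily.dualFilt_eq_basisFilt [DecidableEq ι] (hna : IsNonArchNorm NS ℓ)
    (hv : IsOrthFamily Λ ℓ v) :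
    dualFilt NS ℓ = basisFilt NS v.dualBasis (fun i => -(ℓ (v i)).toReal) := by
  funext φ
  simp only [hv.dualFilt_eq_iSup hna, basisFilt, v.dualBasis_repr, EReal.coe_neg,
    hna.coe_toReal (v.ne_zero _)]

end Dual

/-- Proposition 2.20: if `(C, ℓ)` is an orthogonalizable `Λ`-space with
orthogonal ordered basis `(v₁, …, vₙ)`, then `(C*, ℓ*)` is an orthogonalizable `Λ`-space
with orthogonal ordered basis the dual basis `(v₁*, …, vₙ*)`, and `ℓ*(vᵢ*) = -ℓ(vᵢ)`. -/
theorem dual_basis_orthogonal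
    {Γ : AddSubgroup ℝ} {Λ : Type*} [Field Λ] (NS : NovikovStructure Γ Λ)
    {C : Type*} [AddCommGroup C] [Module Λ C] {ℓ : C → EReal}
    (hna : IsNonArchNorm NS ℓ) {n : ℕ} (v : Module.Basis (Fin n) Λ C)
    (hv : IsOrthFamily Λ ℓ ⇑v) :
    IsOrthogonalizable NS (dualFilt NS ℓ) ∧
    IsOrthFamily Λ (dualFilt NS ℓ) (fun i : Fin n => v.dualBasis i) ∧
    ∀ i : Fin n, dualFilt NS ℓ (v.dualBasis i) = -ℓ (v i) := by
  rw [hv.dualFilt_eq_basisFilt hna]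
  refine ⟨⟨isNonArchNorm_basisFilt NS _ _, n, v.dualBasis, isOrthFamily_basisFilt NS _ _⟩,
    isOrthFamily_basisFilt NS _ _, fun i => ?_⟩
  rw [basisFilt_basis, EReal.coe_neg, hna.coe_toReal (v.ne_zero i)]
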